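/- Let F: (K, ∂K) → (ΩM, Ω₀M) be a non-contractible family of closed curves parametrized by a disc K, and suppose there exists a continuous family of arcs H(x,t) of length at most Λ with H(x,0) constant at F(x)(0), H(x,t)(0) = F(x)(0), H(x,t)(1) = F(x)(t), and H(x,1)(0) = H(x,1)(1). Then the family F̃(x) obtained by closing up the arcs H(x,1) is a non-contractible map (K, ∂K) → (Ω_Λ M, Ω₀M); in particular it is homotopic to F via the closed curves h(x,t) = H(x,t) * F(x)|_{[t,1]}. -/

import Mathlib

/-!
Read the arcs as a square `(t, s) ↦ H x t s`: its top edge `s = 1` is the loop `F x`, its right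
edge `t = 1` is the closed arc `H x 1`, and its left (`t = 0`) and bottom (`s = 0`) edges sit at
the base point `F x 0`. Restricting `H x` to the segments from a point moving along the left and
bottom edges to the corner `(1, 1)` gives closed curves interpolating between `F x` and `H x 1`,
so the closed-up family is homotopic to `F`; a contraction of it would then contract `F`.
-/

open Set
open scoped ENNReal

noncomputable def pathLength {M : Type*} [PseudoEMetricSpace M] (γ : ℝ → M) : ℝ≥0∞ :=
  eVariationOn γ (Set.Icc 0 1)

/-- The disc `K`, realized as the unit square `I²`, and its boundary. -/
def I2 : Set (ℝ × ℝ) := Set.Icc 0 1 ×ˢ Set.Icc 0 1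

def bdI2 : Set (ℝ × ℝ) := I2 \ (Set.Ioo 0 1 ×ˢ Set.Ioo 0 1)

/-- A continuous family of closed curves, i.e. a map of pairs `(K, ∂K) → (ΩM, Ω₀M)`. -/
def IsLoopFamily {M : Type*} [MetricSpace M] (F : ℝ × ℝ → ℝ → M) : Prop :=
  ContinuousOn (fun q : (ℝ × ℝ) × ℝ => F q.1 q.2) (I2 ×ˢ Set.Icc 0 1) ∧
  (∀ x ∈ I2, F x 0 = F x 1) ∧
  (∀ x ∈ bdI2, ∀ t ∈ Set.Icc (0:ℝ) 1, F x t = F x 0)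

def FamiliesHomotopic {M : Type*} [MetricSpace M] (F G : ℝ × ℝ → ℝ → M) : Prop :=
  ∃ Hm : ℝ → ℝ × ℝ → ℝ → M,
    ContinuousOn (fun q : ℝ × (ℝ × ℝ) × ℝ => Hm q.1 q.2.1 q.2.2)
      (Set.Icc 0 1 ×ˢ I2 ×ˢ Set.Icc 0 1) ∧
    (∀ x ∈ I2, ∀ t ∈ Set.Icc (0:ℝ) 1, Hm 0 x t = F x t) ∧
    (∀ x ∈ I2, ∀ t ∈ Set.Icc (0:ℝ) 1, Hm 1 x t = G x t) ∧
    (∀ τ ∈ Set.Icc (0:ℝ) 1, IsLoopFamily (Hm τ))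

def ContractibleFamily {M : Type*} [MetricSpace M] (F : ℝ × ℝ → ℝ → M) : Prop :=
  ∃ G : ℝ × ℝ → ℝ → M, (∀ x ∈ I2, ∀ t ∈ Set.Icc (0:ℝ) 1, G x t = G x 0) ∧
    FamiliesHomotopic F G

section Homotopy

variable {M : Type*} [MetricSpace M]

lemma IsLoopFamily.congr {F G : ℝ × ℝ → ℝ → M} (hF : IsLoopFamily F)
    (h : ∀ x ∈ I2, ∀ t ∈ Icc (0:ℝ) 1, F x t = G x t) : IsLoopFamily G := by
  have h0 : (0:ℝ) ∈ Icc (0:ℝ) 1 := left_mem_Icc.2 zero_le_one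
  have h1 : (1:ℝ) ∈ Icc (0:ℝ) 1 := right_mem_Icc.2 zero_le_one
  refine ⟨hF.1.congr fun q hq => (h q.1 hq.1 q.2 hq.2).symm, fun x hx => ?_, fun x hx t ht => ?_⟩
  · rw [← h x hx 0 h0, ← h x hx 1 h1, hF.2.1 x hx]
  · rw [← h x hx.1 t ht, ← h x hx.1 0 h0, hF.2.2 x hx t ht]

lemma FamiliesHomotopic.isLoopFamily_right {F G : ℝ × ℝ → ℝ → M}
    (h : FamiliesHomotopic F G) : IsLoopFamily G := by
  obtain ⟨Hm, -, -, hHm1, hloop⟩ := h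
  exact (hloop 1 (right_mem_Icc.2 zero_le_one)).congr hHm1

lemma continuousOn_reparam {Hm : ℝ → ℝ × ℝ → ℝ → M}
    (hc : ContinuousOn (fun q : ℝ × (ℝ × ℝ) × ℝ => Hm q.1 q.2.1 q.2.2)
      (Icc 0 1 ×ˢ I2 ×ˢ Icc 0 1))
    {φ : ℝ → ℝ} (hφ : Continuous φ) {a b : ℝ} (hmaps : MapsTo φ (Icc a b) (Icc 0 1)) :
    ContinuousOn (fun q : ℝ × (ℝ × ℝ) × ℝ => Hm (φ q.1) q.2.1 q.2.2)
      (Icc a b ×ˢ I2 ×ˢ Icc 0 1) :=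
  hc.comp (f := fun q : ℝ × (ℝ × ℝ) × ℝ => (φ q.1, q.2)) (by fun_prop)
    fun q hq => ⟨hmaps hq.1, hq.2⟩

lemma FamiliesHomotopic.trans {F G K : ℝ × ℝ → ℝ → M}
    (h₁ : FamiliesHomotopic F G) (h₂ : FamiliesHomotopic G K) : FamiliesHomotopic F K := by
  obtain ⟨A, hAc, hA0, hA1, hAloop⟩ := h₁
  obtain ⟨B, hBc, hB0, hB1, hBloop⟩ := h₂
  refine ⟨fun τ => if τ ≤ 1/2 then A (2*τ) else B (2*τ - 1), ?_, ?_, ?_, ?_⟩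
  · have hS : IsClosed (I2 ×ˢ Icc (0:ℝ) 1) :=
      (isClosed_Icc.prod isClosed_Icc).prod isClosed_Icc
    have hsplit : Icc (0:ℝ) 1 ×ˢ I2 ×ˢ Icc (0:ℝ) 1 =
        Icc 0 (1/2) ×ˢ (I2 ×ˢ Icc 0 1) ∪ Icc (1/2) 1 ×ˢ (I2 ×ˢ Icc 0 1) := by
      rw [← union_prod, Icc_union_Icc_eq_Icc (by norm_num) (by norm_num)]
    rw [hsplit]
    refine ContinuousOn.union_of_isClosed ?_ ?_ (isClosed_Icc.prod hS) (isClosed_Icc.prod hS)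
    · refine (continuousOn_reparam hAc (φ := fun τ => 2*τ) (by fun_prop)
        fun τ hτ => ⟨by linarith [hτ.1], by linarith [hτ.2]⟩).congr ?_
      rintro ⟨τ, x, t⟩ ⟨hτ, -⟩
      simp only [if_pos hτ.2]
    · refine (continuousOn_reparam hBc (φ := fun τ => 2*τ - 1) (by fun_prop)
        fun τ hτ => ⟨by linarith [hτ.1], by linarith [hτ.2]⟩).congr ?_
      rintro ⟨τ, x, t⟩ ⟨hτ, hx, ht⟩
      rcases hτ.1.eq_or_lt with rfl | hlt
      · norm_num [hA1 x hx t ht, hB0 x hx t ht]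
      · simp only [if_neg (not_le.2 hlt)]
  · intro x hx t ht
    norm_num [hA0 x hx t ht]
  · intro x hx t ht
    norm_num [hB1 x hx t ht]
  · intro τ hτ
    by_cases h : τ ≤ 1/2
    · simpa only [if_pos h] using hAloop (2*τ) ⟨by linarith [hτ.1], by linarith⟩
    · simpa only [if_neg h] using hBloop (2*τ - 1) ⟨by linarith, by linarith [hτ.2]⟩

lemma ContractibleFamily.of_familiesHomotopic {F G : ℝ × ℝ → ℝ → M}
    (h : FamiliesHomotopic F G) (hG : ContractibleFamily G) : ContractibleFamily F :=
  let ⟨K, hK, hGK⟩ := hG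
  ⟨K, hK, h.trans hGK⟩

lemma convex_I2 : Convex ℝ I2 := (convex_Icc 0 1).prod (convex_Icc 0 1)

/-- Runs from `(0, 1)` down the left edge of the square to `(0, 0)`, then along the bottom edge
to `(1, 0)`. -/
def sweepStart (τ : ℝ) : ℝ × ℝ := (max (2 * τ - 1) 0, max (1 - 2 * τ) 0)

def sweep (τ t : ℝ) : ℝ × ℝ := AffineMap.lineMap (sweepStart τ) (1, 1) t

lemma sweepStart_mem {τ : ℝ} (hτ : τ ∈ Icc (0:ℝ) 1) : sweepStart τ ∈ I2 :=
  ⟨⟨le_max_right _ _, max_le (by linarith [hτ.2]) zero_le_one⟩,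
    ⟨le_max_right _ _, max_le (by linarith [hτ.1]) zero_le_one⟩⟩

lemma sweepStart_fst_eq_zero_or_snd_eq_zero (τ : ℝ) :
    (sweepStart τ).1 = 0 ∨ (sweepStart τ).2 = 0 := by
  rcases le_total τ (1/2) with h | h
  · exact Or.inl (max_eq_right (by linarith))
  · exact Or.inr (max_eq_right (by linarith))

lemma sweep_mem {τ t : ℝ} (hτ : τ ∈ Icc (0:ℝ) 1) (ht : t ∈ Icc (0:ℝ) 1) : sweep τ t ∈ I2 :=
  convex_I2.lineMap_mem (sweepStart_mem hτ)
    ⟨right_mem_Icc.2 zero_le_one, right_mem_Icc.2 zero_le_one⟩ ht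

lemma continuous_sweep : Continuous fun p : ℝ × ℝ => sweep p.1 p.2 :=
  Continuous.lineMap (by unfold sweepStart; fun_prop) continuous_const continuous_snd

lemma sweep_zero_right (τ : ℝ) : sweep τ 0 = sweepStart τ := AffineMap.lineMap_apply_zero _ _

lemma sweep_one_right (τ : ℝ) : sweep τ 1 = (1, 1) := AffineMap.lineMap_apply_one _ _

lemma sweep_zero_left (t : ℝ) : sweep 0 t = (t, 1) := by
  simp [sweep, sweepStart, AffineMap.lineMap_apply]

lemma sweep_one_left (t : ℝ) : sweep 1 t = (1, t) := by
  norm_num [sweep, sweepStart, AffineMap.lineMap_apply]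

theorem familiesHomotopic_of_arcFamily {F : ℝ × ℝ → ℝ → M} {H : ℝ × ℝ → ℝ → ℝ → M}
    (hFclosed : ∀ x ∈ I2, F x 0 = F x 1)
    (hHcont : ContinuousOn (fun q : (ℝ × ℝ) × ℝ × ℝ => H q.1 q.2.1 q.2.2)
      (I2 ×ˢ Icc 0 1 ×ˢ Icc 0 1))
    (hH0 : ∀ x ∈ I2, ∀ s ∈ Icc (0:ℝ) 1, H x 0 s = F x 0)
    (hHends : ∀ x ∈ I2, ∀ t ∈ Icc (0:ℝ) 1, H x t 0 = F x 0 ∧ H x t 1 = F x t)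
    (hHbd : ∀ x ∈ bdI2, ∀ t ∈ Icc (0:ℝ) 1, ∀ s ∈ Icc (0:ℝ) 1, H x t s = F x 0) :
    FamiliesHomotopic F (fun x => H x 1) := by
  set Hm : ℝ → ℝ × ℝ → ℝ → M := fun τ x t => H x (sweep τ t).1 (sweep τ t).2
  have hcont : ContinuousOn (fun q : ℝ × (ℝ × ℝ) × ℝ => Hm q.1 q.2.1 q.2.2)
      (Icc 0 1 ×ˢ I2 ×ˢ Icc 0 1) :=
    hHcont.comp (f := fun q : ℝ × (ℝ × ℝ) × ℝ => (q.2.1, sweep q.1 q.2.2))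
      (continuous_snd.fst.prodMk
        (continuous_sweep.comp (continuous_fst.prodMk continuous_snd.snd))).continuousOn
      fun q hq => ⟨hq.2.1, sweep_mem hq.1 hq.2.2⟩
  have hstart : ∀ τ ∈ Icc (0:ℝ) 1, ∀ x ∈ I2, Hm τ x 0 = F x 0 := by
    intro τ hτ x hx
    obtain ⟨hfst, hsnd⟩ := sweepStart_mem hτ
    simp only [Hm, sweep_zero_right]
    rcases sweepStart_fst_eq_zero_or_snd_eq_zero τ with h | h
    · rw [h]; exact hH0 x hx _ hsnd
    · rw [h]; exact (hHends x hx _ hfst).1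
  have hend : ∀ τ, ∀ x ∈ I2, Hm τ x 1 = F x 0 := by
    intro τ x hx
    simp only [Hm, sweep_one_right]
    rw [(hHends x hx 1 (right_mem_Icc.2 zero_le_one)).2, hFclosed x hx]
  refine ⟨Hm, hcont, fun x hx t ht => ?_, fun x hx t ht => ?_, fun τ hτ => ⟨?_, ?_, ?_⟩⟩
  · simpa only [Hm, sweep_zero_left] using (hHends x hx t ht).2
  · simp only [Hm, sweep_one_left]
  · exact hcont.comp (f := fun q => (τ, q)) (by fun_prop) fun q hq => ⟨hτ, hq⟩
  · intro x hx
    rw [hstart τ hτ x hx, hend τ x hx]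
  · intro x hx t ht
    rw [hstart τ hτ x hx.1]
    exact hHbd x hx _ (sweep_mem hτ ht).1 _ (sweep_mem hτ ht).2

end Homotopy

theorem stmt_15_general {M : Type*} [MetricSpace M]
    (F : ℝ × ℝ → ℝ → M) (Λ : ℝ)
    (hF : IsLoopFamily F) (hFnc : ¬ ContractibleFamily F)
    (H : ℝ × ℝ → ℝ → ℝ → M)
    (hHcont : ContinuousOn (fun q : (ℝ × ℝ) × ℝ × ℝ => H q.1 q.2.1 q.2.2)
      (I2 ×ˢ Set.Icc 0 1 ×ˢ Set.Icc 0 1))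
    (hH0 : ∀ x ∈ I2, ∀ s ∈ Set.Icc (0:ℝ) 1, H x 0 s = F x 0)
    (hHends : ∀ x ∈ I2, ∀ t ∈ Set.Icc (0:ℝ) 1, H x t 0 = F x 0 ∧ H x t 1 = F x t)
    (hHlen : ∀ x ∈ I2, ∀ t ∈ Set.Icc (0:ℝ) 1, pathLength (H x t) ≤ ENNReal.ofReal Λ)
    (hHbd : ∀ x ∈ bdI2, ∀ t ∈ Set.Icc (0:ℝ) 1, ∀ s ∈ Set.Icc (0:ℝ) 1, H x t s = F x 0) :
    IsLoopFamily (fun x => H x 1) ∧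
    (∀ x ∈ I2, pathLength (H x 1) ≤ ENNReal.ofReal Λ) ∧
    ¬ ContractibleFamily (fun x => H x 1) ∧
    FamiliesHomotopic F (fun x => H x 1) := by
  have hhom : FamiliesHomotopic F (fun x => H x 1) :=
    familiesHomotopic_of_arcFamily hF.2.1 hHcont hH0 hHends hHbd
  exact ⟨hhom.isLoopFamily_right, fun x hx => hHlen x hx 1 (right_mem_Icc.2 zero_le_one),
    fun hc => hFnc (.of_familiesHomotopic hhom hc), hhom⟩

/-- given a non-contractible family `F : (K, ∂K) → (ΩM, Ω₀M)` and a
continuous family of arcs `H(x,t)` of length at most `Λ` with `H x 0` constant at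
`F x 0`, `H x t 0 = F x 0`, `H x t 1 = F x t` and `H x 1 0 = H x 1 1`, the family
`F̃ x := H x 1` obtained by closing up the arcs `H x 1` is a non-contractible map
`(K, ∂K) → (Ω_Λ M, Ω₀M)`; in particular it is homotopic to `F`. -/
theorem stmt_15 {M : Type*} [MetricSpace M] [CompactSpace M]
    (F : ℝ × ℝ → ℝ → M) (Λ : ℝ)
    (hF : IsLoopFamily F) (hFnc : ¬ ContractibleFamily F)
    (H : ℝ × ℝ → ℝ → ℝ → M)
    (hHcont : ContinuousOn (fun q : (ℝ × ℝ) × ℝ × ℝ => H q.1 q.2.1 q.2.2)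
      (I2 ×ˢ Set.Icc 0 1 ×ˢ Set.Icc 0 1))
    (hH0 : ∀ x ∈ I2, ∀ s ∈ Set.Icc (0:ℝ) 1, H x 0 s = F x 0)
    (hHends : ∀ x ∈ I2, ∀ t ∈ Set.Icc (0:ℝ) 1, H x t 0 = F x 0 ∧ H x t 1 = F x t)
    (hHlen : ∀ x ∈ I2, ∀ t ∈ Set.Icc (0:ℝ) 1, pathLength (H x t) ≤ ENNReal.ofReal Λ)
    (hHclose : ∀ x ∈ I2, H x 1 0 = H x 1 1)
    (hHbd : ∀ x ∈ bdI2, ∀ t ∈ Set.Icc (0:ℝ) 1, ∀ s ∈ Set.Icc (0:ℝ) 1, H x t s = F x 0) :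
    IsLoopFamily (fun x => H x 1) ∧
    (∀ x ∈ I2, pathLength (H x 1) ≤ ENNReal.ofReal Λ) ∧
    ¬ ContractibleFamily (fun x => H x 1) ∧
    FamiliesHomotopic F (fun x => H x 1) :=
  stmt_15_general F Λ hF hFnc H hHcont hH0 hHends hHlen hHbd
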